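/- arXiv:2307.01875 — 3 statements merged into one kernel-verified Lean document; each statement's English description precedes it below -/
import Mathlib

section
/- For every μ > 0 and every α ∈ (0,1), the bound G_μ(α) = Φ(Φ^{-1}(1 − α) − μ) is exactly the trade-off function of N(0,1) versus N(μ,1): for every measurable test φ : ℝ → [0,1] with ∫ φ dN(0,1) ≤ α one has 1 − ∫ φ dN(μ,1) ≥ G_μ(α), and there exists a measurable test φ* : ℝ → [0,1] with ∫ φ* dN(0,1) = α and 1 − ∫ φ* dN(μ,1) = G_μ(α) (namely the threshold test φ*(x) = 1 if x > Φ^{-1}(1−α), else 0). -/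
open MeasureTheory ProbabilityTheory

/-- Standard normal cumulative distribution function Φ. -/
noncomputable def stdGaussCDF (x : ℝ) : ℝ := ((gaussianReal 0 1) (Set.Iic x)).toReal

/-- Inverse Φ⁻¹ of the standard normal CDF (on (0,1)). -/
noncomputable def stdGaussCDFInv (p : ℝ) : ℝ := Function.invFun stdGaussCDF p

/-!
Neyman–Pearson: the density ratio of `N(μ,1)` to `N(0,1)` is `x ↦ exp (μ x - μ²/2)`, increasing
for `μ ≥ 0`, so the threshold test `1_{x > t}` is a likelihood-ratio test: for any test `φ`,
`(1_{x > t} - φ x) (g x - c f x) ≥ 0` pointwise, with `f`, `g` the two densities and `c` their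
ratio at `t`. Integrating shows that no test of smaller size has larger power. Choosing
`t = Φ⁻¹(1 - α)` gives size exactly `α`, since `Φ` is continuous and hence onto `(0,1)`, and
power `1 - Φ(t - μ)` by translation.
-/

open Set
open scoped NNReal

namespace ProbabilityTheory

variable (ν : Measure ℝ) [IsProbabilityMeasure ν]

lemma continuous_cdf [NullSingletonClass ν] : Continuous (cdf ν) := by
  refine continuous_iff_continuousAt.2 fun x => ?_
  rw [(monotone_cdf ν).continuousAt_iff_leftLim_eq_rightLim, StieltjesFunction.rightLim_eq]
  have h := (cdf ν).measure_singleton x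
  rw [measure_cdf, measure_singleton, eq_comm, ENNReal.ofReal_eq_zero] at h
  linarith [(monotone_cdf ν).leftLim_le (le_refl x)]

lemma Ioo_subset_range_cdf [NullSingletonClass ν] : Ioo 0 1 ⊆ range (cdf ν) :=
  fun _ ⟨hp0, hp1⟩ =>
    mem_range_of_exists_le_of_exists_ge (continuous_cdf ν)
      ((tendsto_cdf_atBot ν).eventually (ge_mem_nhds hp0)).exists
      ((tendsto_cdf_atTop ν).eventually (le_mem_nhds hp1)).exists

lemma cdf_gaussianReal (m : ℝ) (v : ℝ≥0) (x : ℝ) :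
    cdf (gaussianReal m v) x = cdf (gaussianReal 0 v) (x - m) := by
  rw [cdf_eq_real, cdf_eq_real, ← zero_add m, ← gaussianReal_map_add_const,
    map_measureReal_apply (measurable_add_const m) measurableSet_Iic, zero_add]
  congr 1
  ext y
  simp [sub_eq_add_neg]

end ProbabilityTheory

section NeymanPearson

variable {α : Type*} [MeasurableSpace α] {ν : Measure α} {f g φ ψ : α → ℝ}

theorem integral_mul_le_of_neymanPearson {c : ℝ} (hc : 0 ≤ c) (hf : Integrable f ν)
    (hg : Integrable g ν) (hφ : AEStronglyMeasurable φ ν) (hψ : AEStronglyMeasurable ψ ν)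
    (hφ01 : ∀ x, φ x ∈ Icc (0 : ℝ) 1) (hψ01 : ∀ x, ψ x ∈ Icc (0 : ℝ) 1)
    (hsign : ∀ x, 0 ≤ (ψ x - φ x) * (g x - c * f x))
    (hsize : ∫ x, f x * φ x ∂ν ≤ ∫ x, f x * ψ x ∂ν) :
    ∫ x, g x * φ x ∂ν ≤ ∫ x, g x * ψ x ∂ν := by
  have hbdd : ∀ {h : α → ℝ}, Integrable h ν → ∀ {χ : α → ℝ}, AEStronglyMeasurable χ ν →
      (∀ x, χ x ∈ Icc (0 : ℝ) 1) → Integrable (fun x => h x * χ x) ν := fun hh _ hχ hχ01 =>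
    hh.mul_bdd hχ (ae_of_all _ fun x => by
      rw [Real.norm_eq_abs, abs_of_nonneg (hχ01 x).1]; exact (hχ01 x).2)
  have hdiff : ∀ {h : α → ℝ}, Integrable h ν →
      ∫ x, h x * ψ x - h x * φ x ∂ν = ∫ x, h x * ψ x ∂ν - ∫ x, h x * φ x ∂ν := fun hh =>
    integral_sub (hbdd hh hψ hψ01) (hbdd hh hφ hφ01)
  have hgap : c * (∫ x, f x * ψ x ∂ν - ∫ x, f x * φ x ∂ν)
      ≤ ∫ x, g x * ψ x ∂ν - ∫ x, g x * φ x ∂ν := by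
    rw [← hdiff hf, ← hdiff hg, ← integral_const_mul, ← sub_nonneg, ← integral_sub]
    · exact integral_nonneg fun x => (hsign x).trans_eq (by ring)
    · exact (hbdd hg hψ hψ01).sub (hbdd hg hφ hφ01)
    · exact ((hbdd hf hψ hψ01).sub (hbdd hf hφ hφ01)).const_mul c
  linarith [mul_nonneg hc (sub_nonneg.2 hsize)]

end NeymanPearson

lemma stdGaussCDF_eq_cdf : stdGaussCDF = cdf (gaussianReal 0 1) := by
  ext x
  rw [cdf_eq_real]
  rfl

lemma stdGaussCDF_stdGaussCDFInv {p : ℝ} (hp : p ∈ Ioo 0 1) :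
    stdGaussCDF (stdGaussCDFInv p) = p :=
  haveI := nullSingletonClass_gaussianReal (μ := 0) one_ne_zero
  Function.invFun_eq (stdGaussCDF_eq_cdf ▸ Ioo_subset_range_cdf _ hp)

noncomputable def thresholdTest (t x : ℝ) : ℝ := if t < x then 1 else 0

lemma measurable_thresholdTest (t : ℝ) : Measurable (thresholdTest t) :=
  Measurable.ite measurableSet_Ioi measurable_const measurable_const

lemma thresholdTest_mem_Icc (t x : ℝ) : thresholdTest t x ∈ Icc (0 : ℝ) 1 := by
  unfold thresholdTest; split_ifs <;> simp

lemma integral_thresholdTest (ν : Measure ℝ) [IsProbabilityMeasure ν] (t : ℝ) :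
    ∫ x, thresholdTest t x ∂ν = 1 - cdf ν t := by
  have h : thresholdTest t = (Ioi t).indicator 1 := by
    ext x; simp [thresholdTest, indicator_apply]
  rw [h, integral_indicator_one measurableSet_Ioi, ← compl_Iic,
    probReal_compl_eq_one_sub measurableSet_Iic, cdf_eq_real]

lemma thresholdTest_sub_mul_sub_nonneg {L : ℝ → ℝ} (hL : Monotone L) {p : ℝ}
    (hp : p ∈ Icc (0 : ℝ) 1) (t x : ℝ) : 0 ≤ (thresholdTest t x - p) * (L x - L t) := by
  unfold thresholdTest
  split_ifs with hx
  · exact mul_nonneg (by linarith [hp.2]) (by linarith [hL hx.le])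
  · exact mul_nonneg_of_nonpos_of_nonpos (by linarith [hp.1]) (by linarith [hL (not_lt.1 hx)])

lemma gaussianPDFReal_eq_exp_mul (m x : ℝ) :
    gaussianPDFReal m 1 x = Real.exp (m * x - m ^ 2 / 2) * gaussianPDFReal 0 1 x := by
  simp only [gaussianPDFReal, NNReal.coe_one, mul_one, sub_zero]
  rw [mul_left_comm, ← Real.exp_add]
  ring_nf

theorem integral_gaussianReal_le_integral_thresholdTest {m : ℝ} (hm : 0 ≤ m) {φ : ℝ → ℝ}
    (hφ : Measurable φ) (hφ01 : ∀ x, φ x ∈ Icc (0 : ℝ) 1) (t : ℝ)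
    (hsize : ∫ x, φ x ∂gaussianReal 0 1 ≤ ∫ x, thresholdTest t x ∂gaussianReal 0 1) :
    ∫ x, φ x ∂gaussianReal m 1 ≤ ∫ x, thresholdTest t x ∂gaussianReal m 1 := by
  simp only [integral_gaussianReal_eq_integral_smul one_ne_zero, smul_eq_mul] at hsize ⊢
  set L : ℝ → ℝ := fun x => Real.exp (m * x - m ^ 2 / 2)
  have hL : Monotone L := fun _ _ hxy =>
    Real.exp_le_exp.2 (sub_le_sub_right (mul_le_mul_of_nonneg_left hxy hm) _)
  refine integral_mul_le_of_neymanPearson (c := L t) (Real.exp_nonneg _)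
    (integrable_gaussianPDFReal 0 1) (integrable_gaussianPDFReal m 1) hφ.aestronglyMeasurable
    (measurable_thresholdTest t).aestronglyMeasurable hφ01 (thresholdTest_mem_Icc t)
    (fun x => ?_) hsize
  rw [gaussianPDFReal_eq_exp_mul, ← sub_mul, ← mul_assoc]
  exact mul_nonneg (thresholdTest_sub_mul_sub_nonneg hL (hφ01 x) t x)
    (gaussianPDFReal_nonneg 0 1 x)

/-- `G_μ(α) = Φ(Φ⁻¹(1-α) - μ)` is exactly the trade-off function of `N(0,1)` vs `N(μ,1)`:
every measurable test with type-I error ≤ α has type-II error ≥ G_μ(α), and the threshold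
test `φ*(x) = 1 if x > Φ⁻¹(1-α) else 0` attains type-I error `α` and type-II error `G_μ(α)`. -/
theorem tradeoff_of_gaussians (μ : ℝ) (hμ : 0 < μ) (α : ℝ) (hα : α ∈ Set.Ioo (0 : ℝ) 1) :
    (∀ φ : ℝ → ℝ, Measurable φ → (∀ x, φ x ∈ Set.Icc (0 : ℝ) 1) →
      ∫ x, φ x ∂(gaussianReal 0 1) ≤ α →
      1 - ∫ x, φ x ∂(gaussianReal μ 1) ≥ stdGaussCDF (stdGaussCDFInv (1 - α) - μ)) ∧
    (∃ φs : ℝ → ℝ, Measurable φs ∧ (∀ x, φs x ∈ Set.Icc (0 : ℝ) 1) ∧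
      φs = (fun x => if stdGaussCDFInv (1 - α) < x then (1 : ℝ) else 0) ∧
      ∫ x, φs x ∂(gaussianReal 0 1) = α ∧
      1 - ∫ x, φs x ∂(gaussianReal μ 1) = stdGaussCDF (stdGaussCDFInv (1 - α) - μ)) := by
  set t := stdGaussCDFInv (1 - α)
  have hΦt : stdGaussCDF t = 1 - α :=
    stdGaussCDF_stdGaussCDFInv ⟨by linarith [hα.2], by linarith [hα.1]⟩
  have hsize : ∫ x, thresholdTest t x ∂gaussianReal 0 1 = α := by
    rw [integral_thresholdTest, ← stdGaussCDF_eq_cdf, hΦt, sub_sub_cancel]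
  have hpower : 1 - ∫ x, thresholdTest t x ∂gaussianReal μ 1 = stdGaussCDF (t - μ) := by
    rw [integral_thresholdTest, cdf_gaussianReal, ← stdGaussCDF_eq_cdf, sub_sub_cancel]
  refine ⟨fun φ hφ hφ01 hφα => ?_, thresholdTest t, measurable_thresholdTest t,
    thresholdTest_mem_Icc t, rfl, hsize, hpower⟩
  have := integral_gaussianReal_le_integral_thresholdTest hμ.le hφ hφ01 t (hsize ▸ hφα)
  linarith
end

section
/- Let μ > 0 and let a, b ∈ ℝ with |a − b| ≤ s for some s > 0. Set σ = s/μ. Then for every ε ≥ 0 and every measurable set A ⊆ ℝ, N(a, σ²)(A) ≤ e^ε · N(b, σ²)(A) + δ(ε), where δ(ε) = Φ(−ε/μ + μ/2) − e^ε Φ(−ε/μ − μ/2). That is, the Gaussian output perturbation mechanism with noise standard deviation sens(θ)/μ is (ε, δ(ε))-DP for every ε ≥ 0. -/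
open MeasureTheory ProbabilityTheory Set

/-!
For densities `p, q`, the quantity `P(A) - e^ε Q(A) = ∫_A (p - e^ε q)` is largest on the
likelihood-ratio set `{e^ε q ≤ p}`. The affine change of variables `x ↦ (x - b) / κ`, with
`κ = ±σ`, turns `N(a, σ²), N(b, σ²)` into `N(η, 1), N(0, 1)` with `η = |a - b| / σ ≤ μ`; there
the likelihood-ratio set is the half-line `[ε/η + η/2, ∞)`, whose value is
`δ_η(ε) = Φ(-ε/η + η/2) - e^ε Φ(-ε/η - η/2)`. Finally `η ↦ δ_η(ε)` is increasing, since
its derivative is `φ(-ε/η + η/2) > 0`.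
-/

section LikelihoodRatio

variable {α : Type*} [MeasurableSpace α] {ν : Measure α} {f g : α → ℝ}

theorem setIntegral_sub_const_mul_le (hf : StronglyMeasurable f) (hg : StronglyMeasurable g)
    (hfi : Integrable f ν) (hgi : Integrable g ν) (c : ℝ) {A : Set α} (hA : MeasurableSet A) :
    ∫ x in A, f x ∂ν - c * ∫ x in A, g x ∂ν ≤
      ∫ x in {x | c * g x ≤ f x}, f x ∂ν - c * ∫ x in {x | c * g x ≤ f x}, g x ∂ν := by
  have key := setIntegral_le_nonneg hA (hf.sub (hg.const_mul c)) (hfi.sub (hgi.const_mul c))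
  simp only [Pi.sub_apply, sub_nonneg] at key
  rwa [integral_sub hfi.integrableOn (hgi.const_mul c).integrableOn, integral_const_mul,
    integral_sub hfi.integrableOn (hgi.const_mul c).integrableOn, integral_const_mul] at key

end LikelihoodRatio

lemma toReal_gaussianReal_apply_eq_integral (m : ℝ) {v : NNReal} (hv : v ≠ 0) (s : Set ℝ) :
    (gaussianReal m v s).toReal = ∫ x in s, gaussianPDFReal m v x := by
  rw [gaussianReal_apply_eq_integral m hv,
    ENNReal.toReal_ofReal (integral_nonneg fun x => gaussianPDFReal_nonneg m v x)]

lemma toReal_gaussianReal_Ici (m T : ℝ) :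
    (gaussianReal m 1 (Ici T)).toReal = stdGaussCDF (m - T) := by
  have hstd : gaussianReal 0 1 = (gaussianReal m 1).map (m - ·) := by
    rw [gaussianReal_map_const_sub, sub_self]
  rw [stdGaussCDF, hstd, Measure.map_apply (by fun_prop) measurableSet_Iic]
  congr 2
  ext x
  simp

lemma gaussianReal_map_mul_add (m κ b : ℝ) :
    (gaussianReal m 1).map (fun y => κ * y + b) = gaussianReal (κ * m + b) (κ ^ 2).toNNReal := by
  have hcomp : (fun y => κ * y + b) = (· + b) ∘ (κ * ·) := rfl
  rw [hcomp, ← Measure.map_map (by fun_prop) (by fun_prop), gaussianReal_map_const_mul,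
    gaussianReal_map_add_const]
  congr
  ext
  simp [Real.coe_toNNReal _ (sq_nonneg κ)]

lemma exp_mul_gaussianPDFReal_le_iff {η : ℝ} (hη : 0 < η) (ε x : ℝ) :
    Real.exp ε * gaussianPDFReal 0 1 x ≤ gaussianPDFReal η 1 x ↔ ε / η + η / 2 ≤ x := by
  simp only [gaussianPDFReal, NNReal.coe_one, mul_one, sub_zero]
  rw [mul_left_comm, mul_le_mul_iff_right₀ (by positivity), ← Real.exp_add, Real.exp_le_exp,
    div_add_div _ _ hη.ne' two_ne_zero, div_le_iff₀ (by positivity)]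
  constructor <;> intro h <;> nlinarith

noncomputable def gaussianDelta (η ε : ℝ) : ℝ :=
  stdGaussCDF (-ε / η + η / 2) - Real.exp ε * stdGaussCDF (-ε / η - η / 2)

theorem toReal_gaussianReal_sub_exp_mul_le {η : ℝ} (hη : 0 < η) (ε : ℝ) {A : Set ℝ}
    (hA : MeasurableSet A) :
    (gaussianReal η 1 A).toReal - Real.exp ε * (gaussianReal 0 1 A).toReal ≤
      gaussianDelta η ε := by
  have hB : {x | Real.exp ε * gaussianPDFReal 0 1 x ≤ gaussianPDFReal η 1 x} =
      Ici (ε / η + η / 2) := by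
    ext x
    exact exp_mul_gaussianPDFReal_le_iff hη ε x
  have key := setIntegral_sub_const_mul_le (stronglyMeasurable_gaussianPDFReal η 1)
    (stronglyMeasurable_gaussianPDFReal 0 1) (integrable_gaussianPDFReal η 1)
    (integrable_gaussianPDFReal 0 1) (Real.exp ε) hA
  simp only [hB, ← toReal_gaussianReal_apply_eq_integral _ one_ne_zero,
    toReal_gaussianReal_Ici] at key
  rwa [show η - (ε / η + η / 2) = -ε / η + η / 2 by ring,
    show 0 - (ε / η + η / 2) = -ε / η - η / 2 by ring] at key

lemma hasDerivAt_stdGaussCDF (x : ℝ) : HasDerivAt stdGaussCDF (gaussianPDFReal 0 1 x) x := by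
  have hcont : Continuous (gaussianPDFReal 0 1) := by
    rw [gaussianPDFReal_def]
    fun_prop
  have hint : ∀ y, IntegrableOn (gaussianPDFReal 0 1) (Iic y) :=
    fun _ => (integrable_gaussianPDFReal 0 1).integrableOn
  have hΦ : stdGaussCDF = fun y => (∫ t in (0 : ℝ)..y, gaussianPDFReal 0 1 t) + stdGaussCDF 0 := by
    ext y
    simp only [stdGaussCDF, toReal_gaussianReal_apply_eq_integral 0 one_ne_zero,
      ← intervalIntegral.integral_Iic_sub_Iic (hint 0) (hint y), sub_add_cancel]
  rw [hΦ]
  exact (hcont.integral_hasStrictDerivAt 0 x).hasDerivAt.add_const _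

lemma hasDerivAt_gaussianDelta (ε : ℝ) {η : ℝ} (hη : 0 < η) :
    HasDerivAt (gaussianDelta · ε) (gaussianPDFReal 0 1 (-ε / η + η / 2)) η := by
  have hinv : HasDerivAt (fun t : ℝ => -ε / t) (ε / η ^ 2) η := by
    simpa [div_eq_mul_inv] using (hasDerivAt_inv hη.ne').const_mul (-ε)
  have hplus := (hasDerivAt_stdGaussCDF _).comp η (hinv.add ((hasDerivAt_id η).div_const 2))
  have hminus := ((hasDerivAt_stdGaussCDF _).comp η
    (hinv.sub ((hasDerivAt_id η).div_const 2))).const_mul (Real.exp ε)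
  -- `e^ε φ(-ε/η - η/2) = φ(-ε/η + η/2)`, so the two chain-rule terms combine to a single `φ`.
  have hratio : Real.exp ε * gaussianPDFReal 0 1 (-ε / η - η / 2) =
      gaussianPDFReal 0 1 (-ε / η + η / 2) := by
    simp only [gaussianPDFReal, NNReal.coe_one, mul_one, sub_zero]
    rw [mul_left_comm, ← Real.exp_add]
    congr 2
    field_simp
    ring
  refine (hplus.sub hminus).congr_deriv ?_
  simp only [Pi.add_apply, Pi.sub_apply, id]
  linear_combination (1 / 2 - ε / η ^ 2) * hratio

lemma monotoneOn_gaussianDelta (ε : ℝ) : MonotoneOn (gaussianDelta · ε) (Ioi 0) := by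
  refine (strictMonoOn_of_deriv_pos (convex_Ioi 0) ?_ ?_).monotoneOn
  · exact fun η hη => (hasDerivAt_gaussianDelta ε hη).continuousAt.continuousWithinAt
  · intro η hη
    rw [interior_Ioi] at hη
    rw [(hasDerivAt_gaussianDelta ε hη).deriv]
    exact gaussianPDFReal_pos _ _ _ one_ne_zero

theorem toReal_gaussianReal_sub_exp_mul_le_of_ne {σ : ℝ} (hσ : 0 < σ) {a b : ℝ} (hab : a ≠ b)
    (ε : ℝ) {A : Set ℝ} (hA : MeasurableSet A) :
    (gaussianReal a (σ ^ 2).toNNReal A).toReal -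
        Real.exp ε * (gaussianReal b (σ ^ 2).toNNReal A).toReal ≤
      gaussianDelta (|a - b| / σ) ε := by
  have hdist : 0 < |a - b| := abs_pos.mpr (sub_ne_zero.mpr hab)
  set η := |a - b| / σ
  have hη : 0 < η := by positivity
  -- `κ = ±σ`, the sign chosen so that `a` is sent to `η > 0`
  set κ := (a - b) / η
  have hκ : κ ^ 2 = σ ^ 2 := by
    simp only [κ, η, div_pow, ← sq_abs (a - b)]
    field_simp
  have ha : gaussianReal a (σ ^ 2).toNNReal = (gaussianReal η 1).map (fun y => κ * y + b) := by
    rw [gaussianReal_map_mul_add, hκ, div_mul_cancel₀ _ hη.ne', sub_add_cancel]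
  have hb : gaussianReal b (σ ^ 2).toNNReal = (gaussianReal 0 1).map (fun y => κ * y + b) := by
    rw [gaussianReal_map_mul_add, hκ, mul_zero, zero_add]
  rw [ha, hb, Measure.map_apply (by fun_prop) hA, Measure.map_apply (by fun_prop) hA]
  exact toReal_gaussianReal_sub_exp_mul_le hη ε (hA.preimage (by fun_prop))

/-- The Gaussian output perturbation mechanism with noise standard deviation `σ = s/μ`
(`s` bounding the sensitivity `|a - b|`) is `(ε, δ(ε))`-DP for every `ε ≥ 0`, where
`δ(ε) = Φ(-ε/μ + μ/2) - e^ε Φ(-ε/μ - μ/2)`. -/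
theorem gaussian_mechanism_DP (μ s a b : ℝ) (hμ : 0 < μ) (hs : 0 < s)
    (hab : |a - b| ≤ s) (σ : ℝ) (hσ : σ = s / μ) :
    ∀ ε : ℝ, 0 ≤ ε → ∀ A : Set ℝ, MeasurableSet A →
      ((gaussianReal a (Real.toNNReal (σ ^ 2))) A).toReal ≤
        Real.exp ε * ((gaussianReal b (Real.toNNReal (σ ^ 2))) A).toReal +
        (stdGaussCDF (-ε / μ + μ / 2) - Real.exp ε * stdGaussCDF (-ε / μ - μ / 2)) := by
  intro ε hε A hA
  have hσpos : 0 < σ := hσ ▸ div_pos hs hμ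
  suffices h : (gaussianReal a (σ ^ 2).toNNReal A).toReal -
      Real.exp ε * (gaussianReal b (σ ^ 2).toNNReal A).toReal ≤ gaussianDelta μ ε by
    rw [gaussianDelta] at h
    linarith
  rcases eq_or_ne a b with rfl | hne
  · have hδ : 0 ≤ gaussianDelta μ ε := by
      simpa using toReal_gaussianReal_sub_exp_mul_le hμ ε MeasurableSet.empty
    nlinarith [Real.one_le_exp hε, (gaussianReal a (σ ^ 2).toNNReal A).toReal_nonneg]
  · have hη : |a - b| / σ ≤ μ := by
      rwa [div_le_iff₀ hσpos, hσ, mul_div_cancel₀ _ hμ.ne']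
    calc _ ≤ gaussianDelta (|a - b| / σ) ε :=
          toReal_gaussianReal_sub_exp_mul_le_of_ne hσpos hne ε hA
      _ ≤ gaussianDelta μ ε := monotoneOn_gaussianDelta ε
          (div_pos (abs_pos.mpr (sub_ne_zero.mpr hne)) hσpos) hμ hη
end

section
/- For every μ > 0, the function δ(ε) = Φ(−ε/μ + μ/2) − e^ε Φ(−ε/μ − μ/2) satisfies 0 ≤ δ(ε) ≤ 1 for all ε ≥ 0, and δ is nonincreasing in ε on [0, ∞). -/
open MeasureTheory ProbabilityTheory Real

lemma stdGaussCDF_eq (x : ℝ) :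
    stdGaussCDF x = ∫ t in Set.Iic x, gaussianPDFReal 0 1 t := by
  rw [stdGaussCDF, gaussianReal_apply_eq_integral 0 one_ne_zero,
    ENNReal.toReal_ofReal
      (setIntegral_nonneg measurableSet_Iic fun t _ => gaussianPDFReal_nonneg 0 1 t)]

lemma stdGaussCDF_nonneg (x : ℝ) : 0 ≤ stdGaussCDF x := ENNReal.toReal_nonneg

lemma stdGaussCDF_le_one (x : ℝ) : stdGaussCDF x ≤ 1 := by
  rw [stdGaussCDF]
  refine ENNReal.toReal_le_of_le_ofReal one_pos.le ?_
  simpa using prob_le_one (μ := gaussianReal 0 1) (s := Set.Iic x)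

lemma pdf_shift (μ t : ℝ) : gaussianPDFReal (-μ) 1 t = gaussianPDFReal 0 1 (t + μ) := by
  simp only [gaussianPDFReal, sub_neg_eq_add, sub_zero]

lemma integral_shift (μ : ℝ) (s : Set ℝ) :
    ∫ t in (· + μ) ⁻¹' s, gaussianPDFReal (-μ) 1 t = ∫ t in s, gaussianPDFReal 0 1 t := by
  simp_rw [pdf_shift]
  exact (measurePreserving_add_right volume μ).setIntegral_preimage_emb
    (measurableEmbedding_addRight μ) _ s

/-- Pointwise: for `x ≤ -ε/μ - μ/2`, `e^ε · φ(x) ≤ φ(x + μ)`. -/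
lemma key_pointwise (μ ε : ℝ) (hμ : 0 < μ) (x : ℝ) (hx : x ≤ -ε / μ - μ / 2) :
    Real.exp ε * gaussianPDFReal 0 1 x ≤ gaussianPDFReal (-μ) 1 x := by
  simp only [gaussianPDFReal, sub_neg_eq_add, sub_zero]
  rw [mul_comm (Real.exp ε), mul_assoc, ← Real.exp_add]
  refine mul_le_mul_of_nonneg_left (Real.exp_le_exp.2 ?_) (by positivity)
  have h : μ * x ≤ μ * (-ε / μ - μ / 2) := mul_le_mul_of_nonneg_left hx hμ.le
  rw [mul_sub, mul_div_cancel₀ _ hμ.ne'] at h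
  push_cast
  nlinarith [h]

lemma key_integral (μ ε : ℝ) (hμ : 0 < μ) {s : Set ℝ} (hs : MeasurableSet s)
    (hsub : s ⊆ Set.Iic (-ε / μ - μ / 2)) :
    Real.exp ε * ∫ t in s, gaussianPDFReal 0 1 t ≤ ∫ t in s, gaussianPDFReal (-μ) 1 t := by
  rw [← integral_const_mul]
  refine setIntegral_mono_on
    ((integrable_gaussianPDFReal 0 1).restrict.const_mul _)
    (integrable_gaussianPDFReal (-μ) 1).restrict hs ?_
  exact fun x hx => key_pointwise μ ε hμ x (hsub hx)

/-- For every `μ > 0`, `δ(ε) = Φ(-ε/μ + μ/2) - e^ε Φ(-ε/μ - μ/2)` satisfies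
`0 ≤ δ(ε) ≤ 1` for all `ε ≥ 0`, and `δ` is nonincreasing on `[0, ∞)`. -/
theorem delta_valid_and_antitone (μ : ℝ) (hμ : 0 < μ) :
    (∀ ε : ℝ, 0 ≤ ε →
      0 ≤ stdGaussCDF (-ε / μ + μ / 2) - Real.exp ε * stdGaussCDF (-ε / μ - μ / 2) ∧
      stdGaussCDF (-ε / μ + μ / 2) - Real.exp ε * stdGaussCDF (-ε / μ - μ / 2) ≤ 1) ∧
    AntitoneOn
      (fun ε => stdGaussCDF (-ε / μ + μ / 2) - Real.exp ε * stdGaussCDF (-ε / μ - μ / 2))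
      (Set.Ici (0 : ℝ)) := by
  have hab : ∀ ε : ℝ, -ε / μ + μ / 2 = (-ε / μ - μ / 2) + μ := by intro ε; ring
  -- Φ(b + μ) = ∫ over Iic b of shifted pdf
  have hIic : ∀ b : ℝ, stdGaussCDF (b + μ) = ∫ t in Set.Iic b, gaussianPDFReal (-μ) 1 t := by
    intro b
    rw [stdGaussCDF_eq, ← integral_shift μ (Set.Iic (b + μ))]
    congr 1
    ext x
    simp
  constructor
  · intro ε hε
    constructor
    · rw [hab, hIic, stdGaussCDF_eq, sub_nonneg]
      exact key_integral μ ε hμ measurableSet_Iic subset_rfl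
    · have h1 := stdGaussCDF_le_one (-ε / μ + μ / 2)
      have h2 := stdGaussCDF_nonneg (-ε / μ - μ / 2)
      nlinarith [Real.exp_pos ε]
  · intro ε₁ hε₁ ε₂ hε₂ h12
    simp only [Set.mem_Ici] at hε₁ hε₂
    set b₁ := -ε₁ / μ - μ / 2 with hb₁
    set b₂ := -ε₂ / μ - μ / 2 with hb₂
    have hb : b₂ ≤ b₁ := by
      rw [hb₁, hb₂]
      have : -ε₂ / μ ≤ -ε₁ / μ :=
        div_le_div_of_nonneg_right (by linarith) hμ.le
      linarith
    -- difference of upper CDFs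
    have hdiff1 : stdGaussCDF (b₁ + μ) - stdGaussCDF (b₂ + μ)
        = ∫ t in Set.Ioc b₂ b₁, gaussianPDFReal (-μ) 1 t := by
      rw [hIic, hIic, intervalIntegral.integral_Iic_sub_Iic
        (integrable_gaussianPDFReal (-μ) 1).restrict
        (integrable_gaussianPDFReal (-μ) 1).restrict,
        intervalIntegral.integral_of_le hb]
    have hdiff2 : stdGaussCDF b₁ - stdGaussCDF b₂
        = ∫ t in Set.Ioc b₂ b₁, gaussianPDFReal 0 1 t := by
      rw [stdGaussCDF_eq, stdGaussCDF_eq, intervalIntegral.integral_Iic_sub_Iic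
        (integrable_gaussianPDFReal 0 1).restrict
        (integrable_gaussianPDFReal 0 1).restrict,
        intervalIntegral.integral_of_le hb]
    have hkey : Real.exp ε₁ * ∫ t in Set.Ioc b₂ b₁, gaussianPDFReal 0 1 t
        ≤ ∫ t in Set.Ioc b₂ b₁, gaussianPDFReal (-μ) 1 t :=
      key_integral μ ε₁ hμ measurableSet_Ioc (Set.Ioc_subset_Iic_self)
    have hexp : Real.exp ε₁ ≤ Real.exp ε₂ := Real.exp_le_exp.2 h12
    have hΦ2 : 0 ≤ stdGaussCDF b₂ := stdGaussCDF_nonneg b₂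
    simp only [hab]
    rw [← hb₁, ← hb₂]
    have e1 : Real.exp ε₁ * stdGaussCDF b₁ - Real.exp ε₂ * stdGaussCDF b₂
        ≤ Real.exp ε₁ * (stdGaussCDF b₁ - stdGaussCDF b₂) := by nlinarith
    have e2 : Real.exp ε₁ * (stdGaussCDF b₁ - stdGaussCDF b₂)
        = Real.exp ε₁ * ∫ t in Set.Ioc b₂ b₁, gaussianPDFReal 0 1 t := by rw [hdiff2]
    linarith [hkey, e1, e2]
end
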